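/- Transport equation for the spatial eikonal one-form: assume in addition that u is C² and L¹, …, Lⁿ are C¹ on Ω. Then for each j ∈ {1, …, n}, the function ξ_j = μ ∂_j u is C¹ and satisfies L ξ_j = −Σ_{a=1}^n (∂_j L^a) ξ_a + Σ_{a=1}^n (∂_t L^a) ξ_a · ξ_j on Ω. (The Cartesian-coordinate form of equation (3.18), displayed in the proof of the lemma 'Transport equations for μ, ξ_j, and ξ_j^{(Small)}'.) -/

import Mathlib

/-! Differentiating the eikonal equation `L u = 0` in `x^β` and using the symmetry of second
derivatives gives `L (∂_β u) = -Σ_a (∂_β L^a) ∂_a u`: the commutator `[∂_β, L]` is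
`Σ_a (∂_β L^a) ∂_a`. Since `L` is a derivation, the equation for `ξ_j = (1 / ∂_t u) ∂_j u`
then follows from the Leibniz and quotient rules. -/

/-- Cartesian partial derivative `∂_α f` of a scalar function on `ℝ^m`. -/
noncomputable def pd {m : ℕ} (f : (Fin m → ℝ) → ℝ) (α : Fin m) (p : Fin m → ℝ) : ℝ :=
  fderiv ℝ f p (Pi.single α 1)

open Filter Topology

section PartialDerivative

variable {m : ℕ} {f g : (Fin m → ℝ) → ℝ} {p : Fin m → ℝ}

lemma pd_eq_comp_fderiv (f : (Fin m → ℝ) → ℝ) (α : Fin m) :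
    pd f α = ContinuousLinearMap.apply ℝ ℝ (Pi.single α 1) ∘ fderiv ℝ f :=
  rfl

lemma pd_add (hf : DifferentiableAt ℝ f p) (hg : DifferentiableAt ℝ g p) (α : Fin m) :
    pd (fun q => f q + g q) α p = pd f α p + pd g α p := by
  simp only [pd, fderiv_fun_add hf hg, add_apply]

lemma pd_sum {ι : Type*} (s : Finset ι) {F : ι → (Fin m → ℝ) → ℝ}
    (hF : ∀ i ∈ s, DifferentiableAt ℝ (F i) p) (α : Fin m) :
    pd (fun q => ∑ i ∈ s, F i q) α p = ∑ i ∈ s, pd (F i) α p := by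
  simp only [pd, fderiv_fun_sum hF, sum_apply]

lemma pd_mul (hf : DifferentiableAt ℝ f p) (hg : DifferentiableAt ℝ g p) (α : Fin m) :
    pd (fun q => f q * g q) α p = pd f α p * g p + f p * pd g α p := by
  simp only [pd, fderiv_fun_mul hf hg, add_apply, smul_apply, smul_eq_mul]
  ring

lemma pd_one_div (hg : DifferentiableAt ℝ g p) (hg₀ : g p ≠ 0) (α : Fin m) :
    pd (fun q => 1 / g q) α p = -pd g α p / g p ^ 2 := by
  have h := (hasDerivAt_inv hg₀).comp_hasFDerivAt p hg.hasFDerivAt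
  simp only [pd, one_div]
  rw [show (fun q => (g q)⁻¹) = (fun x : ℝ => x⁻¹) ∘ g from rfl, h.fderiv]
  simp only [smul_apply, smul_eq_mul]
  ring

lemma pd_eq_zero_of_eventuallyEq_zero (hf : f =ᶠ[𝓝 p] 0) (α : Fin m) : pd f α p = 0 := by
  simp [pd, hf.fderiv_eq]

lemma ContDiffAt.pd {k : WithTop ℕ∞} (hf : ContDiffAt ℝ (k + 1) f p) (α : Fin m) :
    ContDiffAt ℝ k (pd f α) p :=
  pd_eq_comp_fderiv f α ▸
    (ContinuousLinearMap.apply ℝ ℝ (Pi.single α 1)).contDiff.contDiffAt.comp p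
      (hf.fderiv_right le_rfl)

lemma ContDiffOn.pd {k : WithTop ℕ∞} {s : Set (Fin m → ℝ)} (hf : ContDiffOn ℝ (k + 1) f s)
    (hs : IsOpen s) (α : Fin m) : ContDiffOn ℝ k (pd f α) s :=
  pd_eq_comp_fderiv f α ▸
    (ContinuousLinearMap.apply ℝ ℝ (Pi.single α 1)).contDiff.comp_contDiffOn
      (hf.fderiv_of_isOpen hs le_rfl)

lemma pd_comm (hf : ContDiffAt ℝ 2 f p) (α β : Fin m) : pd (pd f α) β p = pd (pd f β) α p := by
  have hf' : DifferentiableAt ℝ (fderiv ℝ f) p :=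
    (hf.fderiv_right (m := 1) le_rfl).differentiableAt one_ne_zero
  have hsymm := hf.isSymmSndFDerivAt (by simp)
  simp only [pd_eq_comp_fderiv, Function.comp_def, ContinuousLinearMap.apply_apply,
    fderiv_clm_apply hf' (differentiableAt_const _), fderiv_const_apply,
    ContinuousLinearMap.comp_zero, ContinuousLinearMap.flip_apply, zero_add]
  exact hsymm _ _

end PartialDerivative

section Transport

variable {n : ℕ} (L : Fin n → (Fin (n + 1) → ℝ) → ℝ)

noncomputable def transport (f : (Fin (n + 1) → ℝ) → ℝ) (p : Fin (n + 1) → ℝ) : ℝ :=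
  pd f 0 p + ∑ b : Fin n, L b p * pd f b.succ p

variable {L} {f g u : (Fin (n + 1) → ℝ) → ℝ} {p : Fin (n + 1) → ℝ}

lemma transport_mul (hf : DifferentiableAt ℝ f p) (hg : DifferentiableAt ℝ g p) :
    transport L (fun q => f q * g q) p = transport L f p * g p + f p * transport L g p := by
  have hterm (b : Fin n) : L b p * pd (fun q => f q * g q) b.succ p
      = L b p * pd f b.succ p * g p + f p * (L b p * pd g b.succ p) := by
    rw [pd_mul hf hg]; ring
  simp only [transport, hterm]
  rw [Finset.sum_add_distrib, ← Finset.sum_mul, ← Finset.mul_sum, pd_mul hf hg]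
  ring

lemma transport_one_div (hg : DifferentiableAt ℝ g p) (hg₀ : g p ≠ 0) :
    transport L (fun q => 1 / g q) p = -transport L g p / g p ^ 2 := by
  have hterm (b : Fin n) : L b p * pd (fun q => 1 / g q) b.succ p
      = -(L b p * pd g b.succ p) / g p ^ 2 := by
    rw [pd_one_div hg hg₀]; ring
  simp only [transport, hterm]
  rw [← Finset.sum_div, Finset.sum_neg_distrib, pd_one_div hg hg₀]
  ring

lemma pd_transport (hu : ContDiffAt ℝ 2 u p) (hL : ∀ a, DifferentiableAt ℝ (L a) p)
    (β : Fin (n + 1)) :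
    pd (transport L u) β p
      = transport L (pd u β) p + ∑ a : Fin n, pd (L a) β p * pd u a.succ p := by
  have hpd (α : Fin (n + 1)) : DifferentiableAt ℝ (pd u α) p :=
    (hu.pd (k := 1) α).differentiableAt one_ne_zero
  have hsum : ∀ a ∈ Finset.univ, DifferentiableAt ℝ (fun q => L a q * pd u a.succ q) p :=
    fun a _ => (hL a).mul (hpd a.succ)
  unfold transport
  rw [pd_add (hpd 0) (DifferentiableAt.fun_sum hsum), pd_sum _ hsum]
  simp only [pd_mul (hL _) (hpd _), pd_comm hu, Finset.sum_add_distrib]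
  ring

lemma transport_pd_of_eikonal (hu : ContDiffAt ℝ 2 u p) (hL : ∀ a, DifferentiableAt ℝ (L a) p)
    (heik : transport L u =ᶠ[𝓝 p] 0) (β : Fin (n + 1)) :
    transport L (pd u β) p = -∑ a : Fin n, pd (L a) β p * pd u a.succ p := by
  have h := pd_transport hu hL β
  rw [pd_eq_zero_of_eventuallyEq_zero heik] at h
  linarith

end Transport

theorem xi_transport_equation_general {n : ℕ}
    (Ω : Set (Fin (n + 1) → ℝ)) (hΩ : IsOpen Ω)
    (L : Fin n → (Fin (n + 1) → ℝ) → ℝ)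
    (u : (Fin (n + 1) → ℝ) → ℝ)
    (hu : ContDiffOn ℝ 2 u Ω)
    (hL : ∀ a : Fin n, ContDiffOn ℝ 1 (L a) Ω)
    (heik : ∀ p ∈ Ω, pd u 0 p + ∑ a : Fin n, L a p * pd u a.succ p = 0)
    (hpos : ∀ p ∈ Ω, 0 < pd u 0 p) :
    ∀ j : Fin n,
      ContDiffOn ℝ 1 (fun p => (1 / pd u 0 p) * pd u j.succ p) Ω ∧
      ∀ p ∈ Ω,
        pd (fun q => (1 / pd u 0 q) * pd u j.succ q) 0 p
            + ∑ b : Fin n, L b p * pd (fun q => (1 / pd u 0 q) * pd u j.succ q) b.succ p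
          = -(∑ a : Fin n, pd (L a) j.succ p * ((1 / pd u 0 p) * pd u a.succ p))
            + (∑ a : Fin n, pd (L a) 0 p * ((1 / pd u 0 p) * pd u a.succ p))
              * ((1 / pd u 0 p) * pd u j.succ p) := by
  intro j
  have hμ : ∀ p ∈ Ω, pd u 0 p ≠ 0 := fun p hp => (hpos p hp).ne'
  refine ⟨(contDiffOn_const.div (hu.pd hΩ 0) hμ).mul (hu.pd hΩ j.succ), fun p hp => ?_⟩
  have hΩp : Ω ∈ 𝓝 p := hΩ.mem_nhds hp
  have hup : ContDiffAt ℝ 2 u p := hu.contDiffAt hΩp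
  have hLp (a : Fin n) : DifferentiableAt ℝ (L a) p :=
    ((hL a).contDiffAt hΩp).differentiableAt one_ne_zero
  have hpdu (α : Fin (n + 1)) : DifferentiableAt ℝ (pd u α) p :=
    (hup.pd (k := 1) α).differentiableAt one_ne_zero
  have hμp : DifferentiableAt ℝ (fun q => 1 / pd u 0 q) p := by
    simpa only [one_div] using (hpdu 0).fun_inv (hμ p hp)
  have hLu (β : Fin (n + 1)) :
      transport L (pd u β) p = -∑ a : Fin n, pd (L a) β p * pd u a.succ p :=
    transport_pd_of_eikonal hup hLp (eventually_of_mem hΩp heik) β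
  change transport L (fun q => 1 / pd u 0 q * pd u j.succ q) p = _
  rw [transport_mul hμp (hpdu j.succ), transport_one_div (hpdu 0) (hμ p hp), hLu, hLu]
  simp only [mul_left_comm _ (1 / pd u 0 p), ← Finset.mul_sum]
  field_simp
  ring

/-- Transport equation for the spatial eikonal one-form.  If `u` is `C²`
and the `L^a` are `C¹` on `Ω`, then for each `j ∈ {1,…,n}` the function
`ξ_j = μ ∂_j u` (with `μ = 1/∂_t u`) is `C¹` and satisfies
`L ξ_j = −Σ_a (∂_j L^a) ξ_a + (Σ_a (∂_t L^a) ξ_a) · ξ_j` on `Ω`,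
where `L f = ∂_t f + Σ_b L^b ∂_b f`. -/
theorem xi_transport_equation {n : ℕ} (hn : 1 ≤ n)
    (Ω : Set (Fin (n + 1) → ℝ)) (hΩ : IsOpen Ω)
    (L : Fin n → (Fin (n + 1) → ℝ) → ℝ)
    (u : (Fin (n + 1) → ℝ) → ℝ)
    (hu : ContDiffOn ℝ 2 u Ω)
    (hL : ∀ a : Fin n, ContDiffOn ℝ 1 (L a) Ω)
    (heik : ∀ p ∈ Ω, pd u 0 p + ∑ a : Fin n, L a p * pd u a.succ p = 0)
    (hpos : ∀ p ∈ Ω, 0 < pd u 0 p) :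
    ∀ j : Fin n,
      ContDiffOn ℝ 1 (fun p => (1 / pd u 0 p) * pd u j.succ p) Ω ∧
      ∀ p ∈ Ω,
        pd (fun q => (1 / pd u 0 q) * pd u j.succ q) 0 p
            + ∑ b : Fin n, L b p * pd (fun q => (1 / pd u 0 q) * pd u j.succ q) b.succ p
          = -(∑ a : Fin n, pd (L a) j.succ p * ((1 / pd u 0 p) * pd u a.succ p))
            + (∑ a : Fin n, pd (L a) 0 p * ((1 / pd u 0 p) * pd u a.succ p))
              * ((1 / pd u 0 p) * pd u j.succ p) :=
  xi_transport_equation_general Ω hΩ L u hu hL heik hpos
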